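/- arXiv:2505.18014 — 2 statements merged into one kernel-verified Lean document; each statement's English description precedes it below -/
import Mathlib

section
/- For every natural number $t \ge 0$ and every real number $x$, the following identity holds: $\sum_{i=0}^{t-1} 16^{t-i-1}\sum_{j=1}^{2^i} C_2\!\left(2^i x + 2^i - 1\right) = 2^{4t}\left(\frac{x^2}{16} + \frac{1}{112}\right) - 2^{3t}\left(\frac{x^2}{16} + \frac{x}{8} + \frac{1}{16}\right) + 2^{2t}\left(\frac{x}{8} + \frac{1}{8}\right) - 2^{t}\,\frac{1}{14}$. -/
/-- Generalized binomial coefficient `C₂ y = y (y - 1) / 2`. -/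
noncomputable def C2 (y : ℝ) : ℝ := y * (y - 1) / 2

/-! The closed form `F t` on the right satisfies `F 0 = 0` and
`F (t + 1) = 16 F t + 2^t C₂(2^t x + 2^t - 1)`, the first-order recurrence whose
solution is the weighted sum on the left; checking the recurrence is polynomial
arithmetic in `2^t` and `x`. -/

open Finset

theorem Finset.sum_range_pow_mul_eq_of_recurrence {R : Type*} [CommSemiring R] (a : R)
    (g F : ℕ → R) (h_zero : F 0 = 0) (h_succ : ∀ n, F (n + 1) = a * F n + g n) (t : ℕ) :
    ∑ i ∈ range t, a ^ (t - i - 1) * g i = F t := by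
  induction t with
  | zero => simp [h_zero]
  | succ t ih =>
    have h_shift : ∀ i ∈ range t, a ^ (t + 1 - i - 1) * g i = a * (a ^ (t - i - 1) * g i) := by
      intro i hi
      rw [mem_range] at hi
      rw [show t + 1 - i - 1 = t - i - 1 + 1 by omega, pow_succ']
      ring
    rw [sum_range_succ, sum_congr rfl h_shift, ← mul_sum, ih, h_succ]
    simp

/-- Closed form for `B₍₁,₁₎(x)`:
`∑_{i=0}^{t-1} 16^{t-i-1} ∑_{j=1}^{2^i} C₂(2^i x + 2^i - 1)
  = 2^{4t} (x²/16 + 1/112) - 2^{3t} (x²/16 + x/8 + 1/16)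
    + 2^{2t} (x/8 + 1/8) - 2^t / 14`. -/
theorem closed_form_B11 (t : ℕ) (x : ℝ) :
    ∑ i ∈ Finset.range t, (16 : ℝ) ^ (t - i - 1) *
        ∑ j ∈ Finset.Icc 1 (2 ^ i), C2 ((2 : ℝ) ^ i * x + (2 : ℝ) ^ i - 1)
      = 2 ^ (4 * t) * (x ^ 2 / 16 + 1 / 112)
        - 2 ^ (3 * t) * (x ^ 2 / 16 + x / 8 + 1 / 16)
        + 2 ^ (2 * t) * (x / 8 + 1 / 8) - 2 ^ t * (1 / 14) := by
  simp only [sum_const, Nat.card_Icc, add_tsub_cancel_right, nsmul_eq_mul, Nat.cast_pow,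
    Nat.cast_ofNat]
  refine sum_range_pow_mul_eq_of_recurrence 16 _
    (fun n ↦ 2 ^ (4 * n) * (x ^ 2 / 16 + 1 / 112) - 2 ^ (3 * n) * (x ^ 2 / 16 + x / 8 + 1 / 16)
      + 2 ^ (2 * n) * (x / 8 + 1 / 8) - 2 ^ n * (1 / 14)) (by simp; ring) (fun n ↦ ?_) t
  simp only [C2, pow_mul', pow_succ]
  ring
end

section
/- For every natural number $t \ge 0$ and every real number $x$, the following identity holds: $\sum_{i=0}^{t-1} 16^{t-i-1}\sum_{j=1}^{2^i} C_2\!\left(2^i x + 2^{i+1} - j - 1\right) = 2^{4t}\left(\frac{x^2}{16} + \frac{x}{48} + \frac{3}{112}\right) - 2^{3t}\left(\frac{x^2}{16} + \frac{3x}{16} + \frac{7}{48}\right) + 2^{2t}\left(\frac{x}{6} + \frac{1}{4}\right) - 2^{t}\,\frac{11}{84}$. -/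
open Finset

noncomputable def C3 (y : ℝ) : ℝ := y * (y - 1) * (y - 2) / 6

lemma C3_add_one_sub (y : ℝ) : C3 (y + 1) - C3 y = C2 y := by
  unfold C2 C3
  ring

lemma sum_Icc_C2_sub (n : ℕ) (c : ℝ) :
    ∑ j ∈ Icc 1 n, C2 (c - j) = C3 c - C3 (c - n) := by
  induction n with
  | zero => simp
  | succ n ih =>
    rw [sum_Icc_succ_top (Nat.le_add_left 1 n), ih, ← C3_add_one_sub (c - (n + 1 : ℕ))]
    push_cast
    ring_nf

lemma sum_Icc_C2_mul_add (n : ℕ) (x : ℝ) :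
    ∑ j ∈ Icc 1 n, C2 (n * x + 2 * n - j - 1) =
      (3 * x ^ 2 + 9 * x + 7) / 6 * n ^ 3 - (2 * x + 3) * n ^ 2 + 11 / 6 * n := by
  simp_rw [sub_right_comm _ _ (1 : ℝ)]
  rw [sum_Icc_C2_sub]
  unfold C3
  ring

lemma sum_range_pow_mul_pow {K : Type*} [Field K] {r s : K} (hrs : r ≠ s) (t : ℕ) :
    ∑ i ∈ range t, r ^ (t - i - 1) * s ^ i = (r ^ t - s ^ t) / (r - s) := by
  rw [← neg_div_neg_eq, neg_sub, neg_sub, ← (Commute.all s r).geom_sum₂ hrs.symm]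
  refine sum_congr rfl fun i _ => ?_
  rw [mul_comm, Nat.sub_right_comm]

/-- Closed form for `B₍₂,₁₎(x)`:
`∑_{i=0}^{t-1} 16^{t-i-1} ∑_{j=1}^{2^i} C₂(2^i x + 2^{i+1} - j - 1)
  = 2^{4t} (x²/16 + x/48 + 3/112) - 2^{3t} (x²/16 + 3x/16 + 7/48)
    + 2^{2t} (x/6 + 1/4) - 2^t · 11/84`. -/
theorem closed_form_B21 (t : ℕ) (x : ℝ) :
    ∑ i ∈ Finset.range t, (16 : ℝ) ^ (t - i - 1) *
        ∑ j ∈ Finset.Icc (1 : ℕ) (2 ^ i),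
          C2 ((2 : ℝ) ^ i * x + (2 : ℝ) ^ (i + 1) - (j : ℝ) - 1)
      = 2 ^ (4 * t) * (x ^ 2 / 16 + x / 48 + 3 / 112)
        - 2 ^ (3 * t) * (x ^ 2 / 16 + 3 * x / 16 + 7 / 48)
        + 2 ^ (2 * t) * (x / 6 + 1 / 4) - 2 ^ t * (11 / 84) := by
  have inner (i : ℕ) :
      ∑ j ∈ Icc (1 : ℕ) (2 ^ i), C2 ((2 : ℝ) ^ i * x + (2 : ℝ) ^ (i + 1) - (j : ℝ) - 1) =
      (3 * x ^ 2 + 9 * x + 7) / 6 * 8 ^ i - (2 * x + 3) * 4 ^ i + 11 / 6 * 2 ^ i := by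
    have h := sum_Icc_C2_mul_add (2 ^ i) x
    push_cast at h
    rw [pow_succ', h, ← pow_mul, ← pow_mul, mul_comm i, mul_comm i, pow_mul, pow_mul]
    norm_num
  simp_rw [inner, mul_add, mul_sub, sum_add_distrib, sum_sub_distrib,
    mul_left_comm _ (_ : ℝ) (_ ^ _), ← mul_sum]
  rw [sum_range_pow_mul_pow (by norm_num : (16 : ℝ) ≠ 8),
    sum_range_pow_mul_pow (by norm_num : (16 : ℝ) ≠ 4),
    sum_range_pow_mul_pow (by norm_num : (16 : ℝ) ≠ 2), pow_mul, pow_mul, pow_mul]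
  ring
end
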